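/- With b_p' the Drücker-Prager function, for (s_m,s) ∈ K'_stress and (e_m,e) ∈ K'_strain, the equality b_p'((e_m,e),(s_m,s)) = e_m s_m + tr(e s) holds if and only if the flow rule holds: ((e_m + k_d(tan φ − tan θ)‖e‖), e) ∈ ∂Ψ_{K'_stress}(s_m, s), where Ψ_{K'_stress} is the indicator function of K'_stress and ∂ is the subdifferential with respect to the pairing ⟨·,·⟩'. -/

import Mathlib

/-!
Write `A = e_m + k_d (tan φ − tan θ) ‖e‖`. The strain condition gives `A ≥ k_d tan φ ‖e‖`, and
then Cauchy–Schwarz shows that the linear form `(t_m, t) ↦ A t_m + tr(e t)` is bounded on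
`K'_stress` by its value `A c / tan φ` at the apex `(c / tan φ, 0)`. The difference
`b_p' − ⟨·,·⟩'` equals `A c / tan φ − (A s_m + tr(e s))`, so equality holds exactly when
`(s_m, s)` maximises this form over `K'_stress`, which is the normal-cone condition.
-/

open Real
noncomputable section

/-- The norm `‖a‖ = √(tr(a²))` on symmetric matrices. -/
def symNorm {n : ℕ} (a : Matrix (Fin n) (Fin n) ℝ) : ℝ :=
  Real.sqrt ((a * a).trace)

lemma Matrix.trace_mul_eq_sum_mul_of_isSymm {m : Type*} [Fintype m] {a b : Matrix m m ℝ}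
    (hb : b.IsSymm) : (a * b).trace = ∑ p : m × m, a p.1 p.2 * b p.1 p.2 := by
  simp only [Matrix.trace, Matrix.diag, Matrix.mul_apply, ← Finset.univ_product_univ,
    Finset.sum_product, hb.apply]

lemma symNorm_nonneg {n : ℕ} (a : Matrix (Fin n) (Fin n) ℝ) : 0 ≤ symNorm a :=
  Real.sqrt_nonneg _

lemma trace_mul_le_symNorm_mul_symNorm {n : ℕ} {a b : Matrix (Fin n) (Fin n) ℝ}
    (ha : a.IsSymm) (hb : b.IsSymm) : (a * b).trace ≤ symNorm a * symNorm b := by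
  have := Real.sum_mul_le_sqrt_mul_sqrt Finset.univ (fun p : Fin n × Fin n => a p.1 p.2)
    (fun p => b p.1 p.2)
  simpa only [symNorm, Matrix.trace_mul_eq_sum_mul_of_isSymm ha,
    Matrix.trace_mul_eq_sum_mul_of_isSymm hb, sq] using this

lemma mul_add_trace_mul_le_of_mem_stress {n : ℕ} {kd T c A tm : ℝ}
    {e t : Matrix (Fin n) (Fin n) ℝ} (hkd : 0 < kd) (hT : 0 < T)
    (he : e.IsSymm) (ht : t.IsSymm) (hA : kd * T * symNorm e ≤ A)
    (htK : (1 / kd) * symNorm t + tm * T ≤ c) :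
    A * tm + (e * t).trace ≤ A * (c / T) := by
  have hA0 : 0 ≤ A := (mul_nonneg (by positivity) (symNorm_nonneg e)).trans hA
  rw [mul_div_assoc', le_div_iff₀ hT]
  calc (A * tm + (e * t).trace) * T
      = A * (tm * T) + T * (e * t).trace := by ring
    _ ≤ A * (tm * T) + T * (symNorm e * symNorm t) := by
        gcongr; exact trace_mul_le_symNorm_mul_symNorm he ht
    _ = A * (tm * T) + kd * T * symNorm e * ((1 / kd) * symNorm t) := by field_simp
    _ ≤ A * (tm * T) + A * ((1 / kd) * symNorm t) := by
        gcongr; exact mul_nonneg (by positivity) (symNorm_nonneg t)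
    _ ≤ A * c := by rw [← mul_add]; gcongr; linarith

theorem bpDP_eq_pairing_iff_flow_rule_general (n : ℕ) (c kd φ θ : ℝ) (hkd : 0 < kd)
    (hφ : φ ∈ Set.Ioo 0 (π / 2))
    (em sm : ℝ) (e s : Matrix (Fin n) (Fin n) ℝ)
    (he : e.IsSymm) (hs : s.IsSymm)
    -- (s_m, s) ∈ K'_stress
    (hsK : (1 / kd) * symNorm s + sm * Real.tan φ ≤ c)
    -- (e_m, e) ∈ K'_strain
    (heK : kd * Real.tan θ * symNorm e ≤ em) :
    (c / Real.tan φ) * em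
        + (kd * (Real.tan θ - Real.tan φ)) * (sm - c / Real.tan φ) * symNorm e
      = em * sm + (e * s).trace ↔
      -- flow rule: ((e_m + k_d(tan φ − tan θ)‖e‖), e) ∈ ∂Ψ_{K'_stress}(s_m, s),
      -- i.e. it lies in the normal cone to K'_stress at (s_m, s)
      ∀ (tm : ℝ) (t : Matrix (Fin n) (Fin n) ℝ), t.IsSymm → t.trace = 0 →
        (1 / kd) * symNorm t + tm * Real.tan φ ≤ c →
        (em + kd * (Real.tan φ - Real.tan θ) * symNorm e) * (tm - sm)
            + (e * (t - s)).trace ≤ 0 := by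
  set T := Real.tan φ
  set A := em + kd * (T - Real.tan θ) * symNorm e
  have hT : 0 < T := Real.tan_pos_of_pos_of_lt_pi_div_two hφ.1 hφ.2
  have hA : kd * T * symNorm e ≤ A := by linarith
  have hgap : (c / T) * em + (kd * (Real.tan θ - T)) * (sm - c / T) * symNorm e
      - (em * sm + (e * s).trace) = A * (c / T) - (A * sm + (e * s).trace) := by ring
  rw [← sub_eq_zero, hgap, sub_eq_zero]
  constructor
  · intro hmax tm t ht _ htK
    rw [Matrix.mul_sub, Matrix.trace_sub]
    linarith [mul_add_trace_mul_le_of_mem_stress hkd hT he ht hA htK]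
  · intro hflow
    have hapex := hflow (c / T) 0 Matrix.isSymm_zero (Matrix.trace_zero _ _)
      (by simp [symNorm, hT.ne'])
    rw [zero_sub, Matrix.mul_neg, Matrix.trace_neg] at hapex
    linarith [mul_add_trace_mul_le_of_mem_stress hkd hT he hs hA hsK]

theorem bpDP_eq_pairing_iff_flow_rule (n : ℕ) (c kd φ θ : ℝ) (hc : 0 < c) (hkd : 0 < kd)
    (hφ : φ ∈ Set.Ioo 0 (π / 2)) (hθ : θ ∈ Set.Icc 0 φ)
    (em sm : ℝ) (e s : Matrix (Fin n) (Fin n) ℝ)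
    (he : e.IsSymm) (he0 : e.trace = 0) (hs : s.IsSymm) (hs0 : s.trace = 0)
    -- (s_m, s) ∈ K'_stress
    (hsK : (1 / kd) * symNorm s + sm * Real.tan φ ≤ c)
    -- (e_m, e) ∈ K'_strain
    (heK : kd * Real.tan θ * symNorm e ≤ em) :
    (c / Real.tan φ) * em
        + (kd * (Real.tan θ - Real.tan φ)) * (sm - c / Real.tan φ) * symNorm e
      = em * sm + (e * s).trace ↔
      -- flow rule: ((e_m + k_d(tan φ − tan θ)‖e‖), e) ∈ ∂Ψ_{K'_stress}(s_m, s),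
      -- i.e. it lies in the normal cone to K'_stress at (s_m, s)
      ∀ (tm : ℝ) (t : Matrix (Fin n) (Fin n) ℝ), t.IsSymm → t.trace = 0 →
        (1 / kd) * symNorm t + tm * Real.tan φ ≤ c →
        (em + kd * (Real.tan φ - Real.tan θ) * symNorm e) * (tm - sm)
            + (e * (t - s)).trace ≤ 0 :=
  bpDP_eq_pairing_iff_flow_rule_general n c kd φ θ hkd hφ em sm e s he hs hsK heK
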